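/- arXiv:1811.08098 — 5 statements merged into one kernel-verified Lean document; each statement's English description precedes it below -/
import Mathlib

section
/- Let G be a group and H a maximal abelian subgroup of G. If G is residually finite, then H is separable in G, i.e., H is the intersection of finite-index subgroups of G containing it. -/
def ResiduallyFinite (G : Type*) [Group G] : Prop :=
  ∀ g : G, g ≠ 1 → ∃ (F : Type) (_ : Group F) (_ : Finite F) (φ : G →* F), φ g ≠ 1

def SeparableSubgroup {G : Type*} [Group G] (H : Subgroup G) : Prop :=
  H = ⨅ K ∈ {K : Subgroup G | H ≤ K ∧ K.FiniteIndex}, K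

def MaximalAbelian {G : Type*} [Group G] (H : Subgroup G) : Prop :=
  (∀ x ∈ H, ∀ y ∈ H, x * y = y * x) ∧
    ∀ K : Subgroup G, (∀ x ∈ K, ∀ y ∈ K, x * y = y * x) → H ≤ K → K = H

theorem maximalAbelian_separable {G : Type*} [Group G] (H : Subgroup G)
    (hH : MaximalAbelian H) (hrf : ResiduallyFinite G) : SeparableSubgroup H := by
  apply le_antisymm
  · exact le_iInf fun K => le_iInf fun hK => hK.1
  · intro g hg
    simp only [Subgroup.mem_iInf] at hg
    by_contra hgH
    -- find h ∈ H not commuting with g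
    have hnc : ∃ h ∈ H, g * h ≠ h * g := by
      by_contra hc
      push_neg at hc
      apply hgH
      set S : Set G := insert g (H : Set G) with hS
      have hsub : H ≤ Subgroup.closure S :=
        fun x hx => Subgroup.subset_closure (Set.mem_insert_of_mem _ hx)
      have base : ∀ a ∈ S, ∀ b ∈ S, Commute a b := by
        rintro a (rfl | ha) b (rfl | hb)
        · rfl
        · exact hc b hb
        · exact (hc a ha).symm
        · exact hH.1 a ha b hb
      have step1 : ∀ a ∈ S, ∀ y ∈ Subgroup.closure S, Commute a y := by
        intro a ha y hy
        induction hy using Subgroup.closure_induction with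
        | mem b hb => exact base a ha b hb
        | one => exact Commute.one_right a
        | mul b c _ _ ihb ihc => exact ihb.mul_right ihc
        | inv b _ ihb => exact ihb.inv_right
      have hab : ∀ x ∈ Subgroup.closure S, ∀ y ∈ Subgroup.closure S, x * y = y * x := by
        intro x hx y hy
        induction hx using Subgroup.closure_induction with
        | mem a ha => exact step1 a ha y hy
        | one => exact (Commute.one_left y)
        | mul a b _ _ iha ihb => exact (Commute.mul_left iha ihb)
        | inv a _ iha => exact (Commute.inv_left iha)
      have hKH := hH.2 _ hab hsub
      rw [← hKH]
      exact Subgroup.subset_closure (Set.mem_insert _ _)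
    obtain ⟨h, hh, hgh⟩ := hnc
    have hne : g * h * g⁻¹ * h⁻¹ ≠ 1 := by
      intro hcomm
      apply hgh
      have h1 : g * h * g⁻¹ = h := mul_inv_eq_one.mp hcomm
      calc g * h = g * h * g⁻¹ * g := (inv_mul_cancel_right _ _).symm
        _ = h * g := by rw [h1]
    obtain ⟨F, _, _, φ, hφ⟩ := hrf _ hne
    have hφcomm : φ g * φ h ≠ φ h * φ g := by
      intro hcom
      apply hφ
      simp only [map_mul, map_inv]
      rw [hcom]
      group
    set K : Subgroup G := (Subgroup.centralizer {φ h}).comap φ with hK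
    have hHK : H ≤ K := by
      intro x hx
      simp only [hK, Subgroup.mem_comap, Subgroup.mem_centralizer_iff]
      rintro y rfl
      rw [← map_mul, ← map_mul, hH.1 h hh x hx]
    have hfin : K.FiniteIndex := by
      constructor
      rw [Subgroup.index_comap]
      haveI : Finite φ.range := Set.Finite.to_subtype (Set.toFinite _)
      exact Subgroup.FiniteIndex.index_ne_zero
    have hgK := hg K ⟨hHK, hfin⟩
    simp only [hK, Subgroup.mem_comap, Subgroup.mem_centralizer_iff] at hgK
    exact hφcomm (hgK (φ h) rfl).symm
end

section
/- Let G be a residually finite group and H a subgroup that is an intersection of conjugates of maximal abelian subgroups of G. Then H is separable in G. -/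
/-- Membership criterion for maximal abelian subgroups: an element commuting with all of `M`
lies in `M`. -/
lemma mem_of_maximalAbelian_comm {G : Type*} [Group G] {M : Subgroup G}
    (hM : MaximalAbelian M) {g : G} (hg : ∀ x ∈ M, g * x = x * g) : g ∈ M := by
  set k : Set G := insert g (M : Set G) with hk
  have hcomm : ∀ x ∈ k, ∀ y ∈ k, x * y = y * x := by
    rintro x (rfl | hx) y (rfl | hy)
    · rfl
    · exact hg y hy
    · exact (hg x hx).symm
    · exact hM.1 x hx y hy
  have hle := Subgroup.closure_le_centralizer_centralizer k
  have hKcomm : ∀ x ∈ Subgroup.closure k, ∀ y ∈ Subgroup.closure k, x * y = y * x := by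
    intro x hx y hy
    exact Set.centralizer_centralizer_comm_of_comm hcomm x (hle hx) y (hle hy)
  have hMle : M ≤ Subgroup.closure k := by
    refine le_trans ?_ (Subgroup.closure_mono (Set.subset_insert _ _))
    rw [Subgroup.closure_eq]
  have := hM.2 (Subgroup.closure k) hKcomm hMle
  rw [← this]
  exact Subgroup.subset_closure (Set.mem_insert _ _)

lemma separable_of_separating {G : Type*} [Group G] {H : Subgroup G}
    (hsep : ∀ g ∉ H, ∃ K : Subgroup G, H ≤ K ∧ K.FiniteIndex ∧ g ∉ K) :
    SeparableSubgroup H := by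
  refine le_antisymm (le_iInf₂ fun K hK => hK.1) ?_
  intro g hg
  by_contra hgH
  obtain ⟨K, hHK, hfi, hgK⟩ := hsep g hgH
  simp only [Subgroup.mem_iInf] at hg
  exact hgK (hg K ⟨hHK, hfi⟩)

theorem separable_of_iInf_conjugates_maximalAbelian {G : Type*} [Group G]
    (hrf : ResiduallyFinite G) (H : Subgroup G) {ι : Sort*} (A : ι → Subgroup G)
    (hA : ∀ i, ∃ (g : G) (M : Subgroup G), MaximalAbelian M ∧
      A i = M.map (MulAut.conj g).toMonoidHom)
    (hH : H = ⨅ i, A i) : SeparableSubgroup H := by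
  apply separable_of_separating
  intro g hg
  -- find an index i with g ∉ A i
  have : ¬ ∀ i, g ∈ A i := by
    intro h
    exact hg (hH ▸ Subgroup.mem_iInf.mpr h)
  push_neg at this
  obtain ⟨i, hgi⟩ := this
  obtain ⟨g₀, M, hM, hAi⟩ := hA i
  -- h := g₀⁻¹ * g * g₀ is not in M
  set h : G := g₀⁻¹ * g * g₀ with hh
  have hhM : h ∉ M := by
    intro hmem
    apply hgi
    rw [hAi]
    refine ⟨h, hmem, ?_⟩
    simp [hh, mul_assoc]
  -- find x ∈ M not commuting with h
  have : ¬ ∀ x ∈ M, h * x = x * h := fun hc => hhM (mem_of_maximalAbelian_comm hM hc)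
  push_neg at this
  obtain ⟨x, hxM, hne⟩ := this
  -- the commutator is nontrivial
  have hc : h * x * h⁻¹ * x⁻¹ ≠ 1 := by
    intro hc
    apply hne
    rw [show h * x * h⁻¹ * x⁻¹ = (h * x) * (x * h)⁻¹ by group] at hc
    exact mul_inv_eq_one.mp hc
  obtain ⟨F, _, _, φ, hφ⟩ := hrf _ hc
  -- φ h and φ x don't commute
  have hφne : φ h * φ x ≠ φ x * φ h := by
    intro hcomm
    apply hφ
    simp only [map_mul, map_inv]
    rw [hcomm]
    group
  -- the separating subgroup
  set ψ : G →* F := φ.comp (MulAut.conj g₀⁻¹).toMonoidHom with hψ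
  have hψ_apply : ∀ y : G, ψ y = φ (g₀⁻¹ * y * g₀) := by
    intro y
    simp [hψ, MulAut.conj_apply, mul_assoc]
  refine ⟨Subgroup.comap ψ (Subgroup.centralizer {φ x}), ?_, ?_, ?_⟩
  · -- H ≤ K
    intro y hy
    have hyA : y ∈ A i := by
      rw [hH] at hy
      exact Subgroup.mem_iInf.mp hy i
    rw [hAi] at hyA
    obtain ⟨m, hmM, rfl⟩ := hyA
    simp only [Subgroup.mem_comap]
    rw [Subgroup.mem_centralizer_singleton_iff]
    have : ψ ((MulAut.conj g₀).toMonoidHom m) = φ m := by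
      rw [hψ_apply]
      simp [MulAut.conj_apply, mul_assoc]
    rw [this, ← map_mul, ← map_mul, hM.1 x hxM m hmM]
  · -- finite index
    have hker : ψ.ker ≤ Subgroup.comap ψ (Subgroup.centralizer {φ x}) := by
      intro y hy
      simp only [Subgroup.mem_comap]
      rw [Subgroup.mem_centralizer_singleton_iff]
      simp only [MonoidHom.mem_ker] at hy
      rw [hy]
      simp
    exact Subgroup.finiteIndex_of_le hker
  · -- g ∉ K
    intro hgK
    simp only [Subgroup.mem_comap] at hgK
    rw [Subgroup.mem_centralizer_singleton_iff, hψ_apply] at hgK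
    exact hφne hgK
end

section
/- Let p ≥ q be positive integers and let H ≤ ℤ² be the subgroup generated by u = (q,0), v = (p,1), and w = (p,-1). Then u is primitive in H (i.e., u = n·h with h ∈ H, n ∈ ℤ implies n = ±1) if and only if q divides 2p. -/
/-!
`H` is exactly the set of `(a, b)` with `gcd(q, 2p) ∣ a - b p`: it contains `(p, 1)` and, by Bézout,
`(gcd(q, 2p), 0)`, and the divisibility is preserved by the three generators. Hence `u = (q, 0)`
is a proper multiple of `(gcd(q, 2p), 0) ∈ H` unless `gcd(q, 2p) = q`, i.e. unless `q ∣ 2p`;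
conversely, if `q ∣ 2p` then every `h ∈ H` with `u ∈ ℤ h` is `(a, 0)` with `q ∣ a`.
-/

open AddSubgroup

abbrev snowflakeSubgroup (p q : ℤ) : AddSubgroup (ℤ × ℤ) :=
  closure {(q, 0), (p, 1), (p, -1)}

theorem mem_snowflakeSubgroup_iff {p q : ℤ} {x : ℤ × ℤ} :
    x ∈ snowflakeSubgroup p q ↔ (Int.gcd q (2 * p) : ℤ) ∣ x.1 - x.2 * p := by
  have hu : ((q, 0) : ℤ × ℤ) ∈ snowflakeSubgroup p q := subset_closure (by simp)
  have hv : ((p, 1) : ℤ × ℤ) ∈ snowflakeSubgroup p q := subset_closure (by simp)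
  have hw : ((p, -1) : ℤ × ℤ) ∈ snowflakeSubgroup p q := subset_closure (by simp)
  constructor
  · intro hx
    induction hx using closure_induction with
    | mem x hx =>
      rcases hx with rfl | rfl | rfl
      · simpa using Int.gcd_dvd_left q (2 * p)
      · simp
      · simpa [two_mul] using Int.gcd_dvd_right q (2 * p)
    | zero => simp
    | add x y _ _ hx hy => simpa [add_mul, sub_add_sub_comm] using dvd_add hx hy
    | neg x _ hx => simpa [neg_mul, neg_add_eq_sub] using hx.neg_right
  · rintro ⟨k, hk⟩
    set a := Int.gcdA q (2 * p)
    set b := Int.gcdB q (2 * p)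
    have hx : x = x.2 • ((p, 1) : ℤ × ℤ) + (k * a) • ((q, 0) : ℤ × ℤ)
        + (k * b) • ((p, 1) : ℤ × ℤ) + (k * b) • ((p, -1) : ℤ × ℤ) := by
      rw [Int.gcd_eq_gcd_ab] at hk
      ext <;> simp only [Prod.fst_add, Prod.snd_add, Prod.smul_fst, Prod.smul_snd, smul_eq_mul] <;>
        linarith
    rw [hx]
    exact add_mem (add_mem (add_mem (zsmul_mem hv _) (zsmul_mem hu _)) (zsmul_mem hv _))
      (zsmul_mem hw _)

theorem Int.eq_one_or_neg_one_of_eq_mul_of_dvd {q n a : ℤ} (hq : q ≠ 0) (ha : q ∣ a)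
    (h : q = n * a) : n = 1 ∨ n = -1 := by
  obtain ⟨m, rfl⟩ := ha
  refine Int.eq_one_or_neg_one_of_mul_eq_one (v := m) (mul_left_cancel₀ hq ?_)
  linear_combination -h

theorem snowflake_u_primitive_iff_general (p q : ℤ) (hq : 0 < q) :
    (∀ (n : ℤ) (h : ℤ × ℤ),
        h ∈ AddSubgroup.closure ({(q, 0), (p, 1), (p, -1)} : Set (ℤ × ℤ)) →
        (q, 0) = n • h → n = 1 ∨ n = -1) ↔ q ∣ 2 * p := by
  change (∀ n h, h ∈ snowflakeSubgroup p q → _) ↔ _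
  set d : ℤ := ((Int.gcd q (2 * p) : ℕ) : ℤ)
  constructor
  · intro hprim
    obtain ⟨m, hm⟩ : d ∣ q := Int.gcd_dvd_left q (2 * p)
    have hd : ((d, 0) : ℤ × ℤ) ∈ snowflakeSubgroup p q := mem_snowflakeSubgroup_iff.2 (by simp [d])
    have hqd : q = d := by
      have : 0 ≤ d := Int.natCast_nonneg _
      rcases hprim m (d, 0) hd (by simp [hm, mul_comm]) with rfl | rfl <;> linarith
    rw [hqd]
    exact Int.gcd_dvd_right q (2 * p)
  · intro hdvd n h hh hqh
    rw [mem_snowflakeSubgroup_iff, Int.gcd_eq_left hq.le hdvd] at hh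
    have h1 : q = n * h.1 := congrArg Prod.fst hqh
    have hn : n ≠ 0 := by rintro rfl; simp at h1; omega
    have h2 : h.2 = 0 := by
      simpa [hn] using (congrArg Prod.snd hqh).symm
    exact Int.eq_one_or_neg_one_of_eq_mul_of_dvd hq.ne' (by simpa [h2] using hh) h1

theorem snowflake_u_primitive_iff (p q : ℤ) (hq : 0 < q) (hpq : q ≤ p) :
    (∀ (n : ℤ) (h : ℤ × ℤ),
        h ∈ AddSubgroup.closure ({(q, 0), (p, 1), (p, -1)} : Set (ℤ × ℤ)) →
        (q, 0) = n • h → n = 1 ∨ n = -1) ↔ q ∣ 2 * p :=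
  snowflake_u_primitive_iff_general p q hq
end

section
/- Let u₁,...,uₙ, v₁,...,vₙ ∈ ℤ² and suppose (k₁,...,kₙ) are nonzero integers such that each kᵢuᵢ and kᵢvᵢ is primitive in the subgroup H = ⟨k₁u₁, k₁v₁, ..., kₙuₙ, kₙvₙ⟩ ≤ ℤ². Let tᵢ ∈ ℚ_{>0} be minimal such that tᵢuᵢ ∈ ⟨u_{i+1}, v_{i+1}⟩ (indices mod n), assuming such tᵢ exists. Then for each i, the rational number k_{i+1}tᵢ/kᵢ is an integer. -/
/-- The inclusion of `ℤ × ℤ` into `ℚ × ℚ`. -/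
def intToRat (x : ℤ × ℤ) : ℚ × ℚ := ((x.1 : ℚ), (x.2 : ℚ))

theorem regulating_ratio_is_integer (n : ℕ) [NeZero n]
    (u v : Fin n → ℤ × ℤ) (k : Fin n → ℤ) (hk : ∀ i, k i ≠ 0)
    (H : AddSubgroup (ℤ × ℤ))
    (hH : H = AddSubgroup.closure
      (Set.range (fun i => k i • u i) ∪ Set.range (fun i => k i • v i)))
    (hprim : ∀ i, (∀ (m : ℤ) (h : ℤ × ℤ), h ∈ H → k i • u i = m • h → m = 1 ∨ m = -1) ∧
      (∀ (m : ℤ) (h : ℤ × ℤ), h ∈ H → k i • v i = m • h → m = 1 ∨ m = -1))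
    (t : Fin n → ℚ)
    (ht : ∀ i, IsLeast {s : ℚ | 0 < s ∧ s • intToRat (u i) ∈
      AddSubgroup.closure ({intToRat (u (i + 1)), intToRat (v (i + 1))} : Set (ℚ × ℚ))} (t i)) :
    ∀ i, ∃ z : ℤ, (k (i + 1) : ℚ) * t i / (k i : ℚ) = (z : ℚ) := by
  intro i
  obtain ⟨⟨htpos, hmem⟩, _⟩ := ht i
  rw [AddSubgroup.mem_closure_pair] at hmem
  obtain ⟨a, b, hab⟩ := hmem
  set r : ℚ := (k (i + 1) : ℚ) * t i / (k i : ℚ) with hr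
  set h : ℤ × ℤ := a • (k (i + 1) • u (i + 1)) + b • (k (i + 1) • v (i + 1)) with hhdef
  have hu1 : k (i + 1) • u (i + 1) ∈ H := hH ▸ AddSubgroup.subset_closure (Or.inl ⟨i + 1, rfl⟩)
  have hv1 : k (i + 1) • v (i + 1) ∈ H := hH ▸ AddSubgroup.subset_closure (Or.inr ⟨i + 1, rfl⟩)
  have huiH : k i • u i ∈ H := hH ▸ AddSubgroup.subset_closure (Or.inl ⟨i, rfl⟩)
  have hhH : h ∈ H := AddSubgroup.add_mem _ (AddSubgroup.zsmul_mem _ hu1 a)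
    (AddSubgroup.zsmul_mem _ hv1 b)
  have hki : (k i : ℚ) ≠ 0 := Int.cast_ne_zero.mpr (hk i)
  have hab1 : (a : ℚ) * (u (i + 1)).1 + (b : ℚ) * (v (i + 1)).1 = t i * (u i).1 := by
    have := congrArg Prod.fst hab
    simpa [intToRat, Prod.smul_def, smul_eq_mul] using this
  have hab2 : (a : ℚ) * (u (i + 1)).2 + (b : ℚ) * (v (i + 1)).2 = t i * (u i).2 := by
    have := congrArg Prod.snd hab
    simpa [intToRat, Prod.smul_def, smul_eq_mul] using this
  have hden0 : ((r.den : ℤ) : ℚ) ≠ 0 := by exact_mod_cast r.den_ne_zero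
  have hrnum : (r.num : ℚ) = r * (r.den : ℚ) := by
    have h1 := Rat.num_div_den r
    rw [div_eq_iff (by exact_mod_cast hden0)] at h1
    exact_mod_cast h1
  have hrk : r * (k i : ℚ) = (k (i + 1) : ℚ) * t i := by
    rw [hr]; field_simp
  have q1 : (r.num : ℚ) * ((k i : ℚ) * (u i).1) = (r.den : ℚ) *
      ((a : ℚ) * ((k (i+1) : ℚ) * (u (i+1)).1) + (b : ℚ) * ((k (i+1) : ℚ) * (v (i+1)).1)) := by
    rw [hrnum]
    linear_combination ((r.den : ℚ) * (u i).1) * hrk - ((r.den : ℚ) * (k (i+1) : ℚ)) * hab1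
  have q2 : (r.num : ℚ) * ((k i : ℚ) * (u i).2) = (r.den : ℚ) *
      ((a : ℚ) * ((k (i+1) : ℚ) * (u (i+1)).2) + (b : ℚ) * ((k (i+1) : ℚ) * (v (i+1)).2)) := by
    rw [hrnum]
    linear_combination ((r.den : ℚ) * (u i).2) * hrk - ((r.den : ℚ) * (k (i+1) : ℚ)) * hab2
  have z1 : r.num * (k i * (u i).1) = (r.den : ℤ) *
      (a * (k (i+1) * (u (i+1)).1) + b * (k (i+1) * (v (i+1)).1)) := by exact_mod_cast q1
  have z2 : r.num * (k i * (u i).2) = (r.den : ℤ) *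
      (a * (k (i+1) * (u (i+1)).2) + b * (k (i+1) * (v (i+1)).2)) := by exact_mod_cast q2
  have key : r.num • (k i • u i) = (r.den : ℤ) • h := by
    apply Prod.ext
    · simp only [hhdef, Prod.smul_fst, Prod.fst_add, smul_eq_mul]
      linear_combination z1
    · simp only [hhdef, Prod.smul_snd, Prod.snd_add, smul_eq_mul]
      linear_combination z2
  have hcop : IsCoprime r.num (r.den : ℤ) :=
    Int.isCoprime_iff_gcd_eq_one.mpr (by simpa [Int.gcd] using r.reduced)
  obtain ⟨α, β, hαβ⟩ := hcop
  set g : ℤ × ℤ := α • h + β • (k i • u i) with hg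
  have hgH : g ∈ H := AddSubgroup.add_mem _ (AddSubgroup.zsmul_mem _ hhH α)
    (AddSubgroup.zsmul_mem _ huiH β)
  have hfact : k i • u i = (r.den : ℤ) • g := by
    calc k i • u i = (α * r.num + β * (r.den : ℤ)) • (k i • u i) := by rw [hαβ, one_smul]
      _ = α • (r.num • (k i • u i)) + β • ((r.den : ℤ) • (k i • u i)) := by
          rw [add_smul, mul_smul, mul_smul]
      _ = α • ((r.den : ℤ) • h) + β • ((r.den : ℤ) • (k i • u i)) := by rw [key]
      _ = (r.den : ℤ) • (α • h + β • (k i • u i)) := by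
          conv_rhs => rw [smul_add]
          rw [smul_comm α ((r.den : ℤ)) h, smul_comm β ((r.den : ℤ)) (k i • u i)]
      _ = (r.den : ℤ) • g := by rw [hg]
  have hd := (hprim i).1 (r.den : ℤ) g hgH hfact
  have hden1 : r.den = 1 := by
    rcases hd with h1 | h1 <;> omega
  exact ⟨r.num, (Rat.coe_int_num_of_den_eq_one hden1).symm⟩
end

section
/- Let G be a finitely generated group with a nontrivial cyclic subgroup C = ⟨c⟩ and an element s with s·cᵐ·s⁻¹ = cⁿ where |m| ≠ |n| and m,n ≠ 0 (i.e., G contains a Baumslag–Solitar configuration BS(m,n) with m ≠ ±n, with c of infinite order). Then the subgroup ⟨c⟩ is not separable in G. -/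
open Subgroup

section ConjugatePowers

variable {G : Type*} [Group G] {x t : G} {m n : ℤ}

theorem gcd_orderOf_dvd_of_conj (hx : IsOfFinOrder x) (h : t * x ^ m * t⁻¹ = x ^ n) :
    (n.gcd (orderOf x) : ℤ) ∣ m := by
  have hsc : SemiconjBy t (x ^ m) (x ^ n) := by
    rw [SemiconjBy, ← h, inv_mul_cancel_right]
  obtain ⟨e, hde⟩ := Int.gcd_dvd_right n (orderOf x)
  have he : e ≠ 0 := by
    rintro rfl
    simp [hx.orderOf_pos.ne'] at hde
  -- `orderOf x = gcd n (orderOf x) * e` divides `n * e`, so it divides `m * e` as well.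
  have hne : x ^ (n * e) = 1 := by
    rw [← orderOf_dvd_iff_zpow_eq_one, hde]
    exact mul_dvd_mul_right (Int.gcd_dvd_left n _) e
  have hme : x ^ (m * e) = 1 := by
    rwa [zpow_mul, (hsc.zpow_right e).eq_one_iff, ← zpow_mul]
  rw [← orderOf_dvd_iff_zpow_eq_one, hde] at hme
  exact (mul_dvd_mul_iff_right he).mp hme

theorem zpow_mem_zpowers_zpow_of_conj (hx : IsOfFinOrder x) (h : t * x ^ m * t⁻¹ = x ^ n) :
    x ^ m ∈ zpowers (x ^ n) := by
  obtain ⟨q, rfl⟩ := gcd_orderOf_dvd_of_conj hx h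
  have hbezout : x ^ (n.gcd (orderOf x) : ℤ) = (x ^ n) ^ n.gcdA (orderOf x) := by
    rw [Int.gcd_eq_gcd_ab, zpow_add, zpow_mul, zpow_mul, zpow_natCast, pow_orderOf_eq_one,
      one_zpow, mul_one]
  rw [zpow_mul, hbezout, ← zpow_mul]
  exact zpow_mem_zpowers _ _

theorem inv_conj_zpow_mem_zpowers (hx : IsOfFinOrder x) (h : t * x ^ m * t⁻¹ = x ^ n) :
    t⁻¹ * x ^ m * t ∈ zpowers x := by
  obtain ⟨k, hk⟩ := mem_zpowers_iff.mp (zpow_mem_zpowers_zpow_of_conj hx h)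
  have hinv : t⁻¹ * x ^ n * t = x ^ m := by rw [← h]; group
  have hpow : (t⁻¹ * x ^ n * t) ^ k = t⁻¹ * (x ^ n) ^ k * t := by
    simpa using conj_zpow (a := t⁻¹) (b := x ^ n) (i := k)
  rw [← hk, ← hpow, hinv, ← zpow_mul]
  exact zpow_mem_zpowers _ _

end ConjugatePowers

section Separable

variable {G : Type*} [Group G]

theorem SeparableSubgroup.mem_of_forall_mk_mem_map {H : Subgroup G} (hH : SeparableSubgroup H)
    {g : G} (hg : ∀ (N : Subgroup G) [N.Normal] [N.FiniteIndex],
      (g : G ⧸ N) ∈ H.map (QuotientGroup.mk' N)) :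
    g ∈ H := by
  rw [hH, mem_iInf]
  intro K
  rw [mem_iInf]
  rintro ⟨hHK, hK⟩
  have := finiteIndex_normalCore K
  obtain ⟨h, hh, hhg⟩ := mem_map.mp (hg K.normalCore)
  have hcore : h⁻¹ * g ∈ K := normalCore_le K (QuotientGroup.eq.mp hhg)
  simpa using K.mul_mem (hHK hh) hcore

theorem SeparableSubgroup.inv_conj_zpow_mem_zpowers {c t : G} {m n : ℤ}
    (hsep : SeparableSubgroup (zpowers c)) (h : t * c ^ m * t⁻¹ = c ^ n) :
    t⁻¹ * c ^ m * t ∈ zpowers c := by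
  refine hsep.mem_of_forall_mk_mem_map fun N _ _ ↦ ?_
  rw [MonoidHom.map_zpowers]
  have hN : (t : G ⧸ N) * (c : G ⧸ N) ^ m * (t : G ⧸ N)⁻¹ = (c : G ⧸ N) ^ n := by
    simpa using congrArg (QuotientGroup.mk (s := N)) h
  simpa using _root_.inv_conj_zpow_mem_zpowers (isOfFinOrder_of_finite _) hN

variable {c t : G}

theorem mul_eq_mul_of_conj_zpow (hc : ¬IsOfFinOrder c) {j m n : ℤ}
    (hj : t * c ^ j * t⁻¹ = c ^ m) (hm : t * c ^ m * t⁻¹ = c ^ n) : n * j = m * m := by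
  apply injective_zpow_iff_not_isOfFinOrder.mpr hc
  calc c ^ (n * j) = t * c ^ (j * m) * t⁻¹ := by
        rw [zpow_mul, ← hm, conj_zpow, ← zpow_mul, mul_comm]
    _ = c ^ (m * m) := by rw [zpow_mul, ← conj_zpow, hj, ← zpow_mul]

theorem ne_zero_of_conj_zpow_of_abs_lt (hc : ¬IsOfFinOrder c) {m n : ℤ}
    (h : t * c ^ m * t⁻¹ = c ^ n) (hlt : |m| < |n|) : m ≠ 0 := by
  rintro rfl
  rw [zpow_zero, mul_one, mul_inv_cancel, eq_comm] at h
  have hn : n = 0 := injective_zpow_iff_not_isOfFinOrder.mpr hc (by simpa using h)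
  simp [hn] at hlt

theorem not_separable_zpowers_of_conj_zpow_of_abs_lt (hc : ¬IsOfFinOrder c) {m n : ℤ}
    (h : t * c ^ m * t⁻¹ = c ^ n) (hlt : |m| < |n|) : ¬SeparableSubgroup (zpowers c) := by
  intro hsep
  induction hN : m.natAbs using Nat.strong_induction_on generalizing m n with
  | _ N ih =>
    obtain ⟨j, hj⟩ := mem_zpowers_iff.mp (hsep.inv_conj_zpow_mem_zpowers h)
    have hj_conj : t * c ^ j * t⁻¹ = c ^ m := by rw [hj]; group
    have hm : m ≠ 0 := ne_zero_of_conj_zpow_of_abs_lt hc h hlt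
    have hjm : n * j = m * m := mul_eq_mul_of_conj_zpow hc hj_conj h
    have hj_lt : |j| < |m| := by
      have habs : |n| * |j| = |m| * |m| := by rw [← abs_mul, ← abs_mul, hjm]
      nlinarith [abs_pos.mpr hm, abs_nonneg j]
    exact ih j.natAbs (hN ▸ by zify; exact hj_lt) hj_conj hj_lt rfl

end Separable

theorem bs_subgroup_not_separable_general {G : Type*} [Group G]
    (c s : G) (hc : ¬ IsOfFinOrder c) (m n : ℤ)
    (hmn : |m| ≠ |n|) (hconj : s * c ^ m * s⁻¹ = c ^ n) :
    ¬ SeparableSubgroup (Subgroup.zpowers c) := by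
  rcases hmn.lt_or_gt with hlt | hgt
  · exact not_separable_zpowers_of_conj_zpow_of_abs_lt hc hconj hlt
  · have hconj' : s⁻¹ * c ^ n * s⁻¹⁻¹ = c ^ m := by rw [← hconj]; group
    exact not_separable_zpowers_of_conj_zpow_of_abs_lt hc hconj' hgt

theorem bs_subgroup_not_separable {G : Type*} [Group G] (hfg : Group.FG G)
    (c s : G) (hc : ¬ IsOfFinOrder c) (m n : ℤ) (hm : m ≠ 0) (hn : n ≠ 0)
    (hmn : |m| ≠ |n|) (hconj : s * c ^ m * s⁻¹ = c ^ n) :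
    ¬ SeparableSubgroup (Subgroup.zpowers c) :=
  bs_subgroup_not_separable_general c s hc m n hmn hconj
end
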